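/- arXiv:1703.04208 — 4 statements merged into one kernel-verified Lean document; each statement's English description precedes it below -/
import Mathlib

section
/- Let $q\ge 1$ and $u\in L^q(\mathbb{R}^N,\mathbb{R}^d)$. Then for every $\varepsilon>0$ and every unit vector $\vec{k}\in S^{N-1}$, $$\int_{\mathbb{R}^N}\frac{1}{\varepsilon}\big|u(x+\varepsilon\vec{k})-u(x)\big|^q\,dx\ \le\ \frac{2^{N+q}}{\mathcal{L}^N(B_1(0))}\int_{B_1(0)}\int_{\mathbb{R}^N}\frac{1}{\varepsilon|z|}\big|u(x+\varepsilon z)-u(x)\big|^q\,dx\,dz.$$ -/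
/-!
Write `G w = ∫ ‖u (x + ε w) - u x‖ ^ q dx`. Translation invariance of Lebesgue measure and
`(a + b) ^ q ≤ 2 ^ (q - 1) (a ^ q + b ^ q)` give `G k ≤ 2 ^ (q - 1) (G (k - z) + G z)` for
every `z`. Average this over the ball of radius `1/2` centred at `k/2`: it is invariant under
`z ↦ k - z`, lies in `B₁(0)` and has measure `2⁻ᴺ |B₁(0)|`, so
`G k |B₁(0)| ≤ 2 ^ (N + q) ∫_{B₁(0)} G`. Finally `ε ‖z‖ ≤ ε` on `B₁(0)`.
-/

open MeasureTheory Metric Set Module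
open scoped ENNReal

theorem ofReal_norm_sub_rpow_le {F : Type*} [SeminormedAddGroup F] {q : ℝ} (hq : 1 ≤ q)
    (a b c : F) :
    ENNReal.ofReal (‖a - c‖ ^ q) ≤
      2 ^ (q - 1) * (ENNReal.ofReal (‖a - b‖ ^ q) + ENNReal.ofReal (‖b - c‖ ^ q)) := by
  have hq₀ : 0 ≤ q := zero_le_one.trans hq
  calc ENNReal.ofReal (‖a - c‖ ^ q)
      ≤ ENNReal.ofReal ((‖a - b‖ + ‖b - c‖) ^ q) := by
        gcongr
        exact norm_sub_le_norm_sub_add_norm_sub a b c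
    _ = (ENNReal.ofReal ‖a - b‖ + ENNReal.ofReal ‖b - c‖) ^ q := by
        rw [← ENNReal.ofReal_add (norm_nonneg _) (norm_nonneg _),
          ENNReal.ofReal_rpow_of_nonneg (by positivity) hq₀]
    _ ≤ 2 ^ (q - 1) * (ENNReal.ofReal ‖a - b‖ ^ q + ENNReal.ofReal ‖b - c‖ ^ q) :=
        ENNReal.rpow_add_le_mul_rpow_add_rpow _ _ hq
    _ = _ := by
        rw [ENNReal.ofReal_rpow_of_nonneg (norm_nonneg _) hq₀,
          ENNReal.ofReal_rpow_of_nonneg (norm_nonneg _) hq₀]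

namespace MeasureTheory

section DiffLIntegral

variable {E F : Type*} [MeasurableSpace E] [AddGroup E] [SeminormedAddCommGroup F]

noncomputable def diffLIntegral (μ : Measure E) (q : ℝ) (v : E → F) (h : E) : ℝ≥0∞ :=
  ∫⁻ x, ENNReal.ofReal (‖v (x + h) - v x‖ ^ q) ∂μ

variable {μ : Measure E} {q : ℝ} {u v : E → F}

theorem diffLIntegral_congr_ae [MeasurableAdd E] [μ.IsAddRightInvariant] (huv : u =ᵐ[μ] v) :
    diffLIntegral μ q u = diffLIntegral μ q v := by
  funext h
  refine lintegral_congr_ae ?_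
  have huv_add : (fun x ↦ u (x + h)) =ᵐ[μ] fun x ↦ v (x + h) :=
    (measurePreserving_add_right μ h).quasiMeasurePreserving.ae_eq_comp huv
  filter_upwards [huv, huv_add] with x hx hxh
  rw [hx, hxh]

theorem measurable_diffLIntegral [MeasurableAdd₂ E] [SFinite μ] (hv : StronglyMeasurable v) :
    Measurable (diffLIntegral μ q v) :=
  Measurable.lintegral_prod_right
    (((hv.comp_measurable (measurable_snd.add measurable_fst)).sub
      (hv.comp_measurable measurable_snd)).norm.measurable.pow_const q).ennreal_ofReal

theorem diffLIntegral_add_le [MeasurableAdd E] [μ.IsAddRightInvariant] (hq : 1 ≤ q)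
    (hv : StronglyMeasurable v) (h₁ h₂ : E) :
    diffLIntegral μ q v (h₁ + h₂) ≤
      2 ^ (q - 1) * (diffLIntegral μ q v h₁ + diffLIntegral μ q v h₂) := by
  have hshift : ∫⁻ x, ENNReal.ofReal (‖v (x + h₁ + h₂) - v (x + h₁)‖ ^ q) ∂μ =
      diffLIntegral μ q v h₂ :=
    lintegral_add_right_eq_self (fun y ↦ ENNReal.ofReal (‖v (y + h₂) - v y‖ ^ q)) h₁
  have hmeas : AEMeasurable (fun x ↦ ENNReal.ofReal (‖v (x + h₁) - v x‖ ^ q)) μ :=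
    (((hv.comp_measurable (measurable_add_const h₁)).sub hv).norm.measurable.pow_const
      q).ennreal_ofReal.aemeasurable
  calc diffLIntegral μ q v (h₁ + h₂)
      ≤ ∫⁻ x, 2 ^ (q - 1) * (ENNReal.ofReal (‖v (x + h₁ + h₂) - v (x + h₁)‖ ^ q) +
          ENNReal.ofReal (‖v (x + h₁) - v x‖ ^ q)) ∂μ :=
        lintegral_mono fun x ↦ by rw [← add_assoc]; exact ofReal_norm_sub_rpow_le hq _ _ _
    _ = 2 ^ (q - 1) * (diffLIntegral μ q v h₂ + diffLIntegral μ q v h₁) := by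
        rw [lintegral_const_mul' _ _ (by finiteness), lintegral_add_right' _ hmeas, hshift]
        rfl
    _ = _ := by rw [add_comm (diffLIntegral μ q v h₂)]

end DiffLIntegral

theorem mul_measure_le_two_mul_setLIntegral {E : Type*} [MeasurableSpace E] [AddGroup E]
    [MeasurableAdd E] [MeasurableNeg E] {μ : Measure E} [μ.IsNegInvariant] [μ.IsAddLeftInvariant]
    {f : E → ℝ≥0∞} (hf : Measurable f) {s : Set E} (hs : MeasurableSet s) {k : E}
    (hsk : (k - ·) ⁻¹' s = s) {c : ℝ≥0∞} (hc : ∀ z ∈ s, c ≤ f (k - z) + f z) :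
    c * μ s ≤ 2 * ∫⁻ z in s, f z ∂μ := by
  have hreflect : ∫⁻ z in s, f (k - z) ∂μ = ∫⁻ z in s, f z ∂μ := by
    conv_lhs => rw [← hsk]
    exact (μ.measurePreserving_sub_left k).setLIntegral_comp_preimage_emb
      (MeasurableEquiv.subLeft k).measurableEmbedding f s
  calc c * μ s = ∫⁻ _ in s, c ∂μ := (setLIntegral_const s c).symm
    _ ≤ ∫⁻ z in s, (f (k - z) + f z) ∂μ := setLIntegral_mono' hs hc
    _ = 2 * ∫⁻ z in s, f z ∂μ := by
        rw [lintegral_add_right _ hf, hreflect, two_mul]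

theorem setLIntegral_ball_div_ofReal_le {E : Type*} [SeminormedAddGroup E] [MeasurableSpace E]
    [OpensMeasurableSpace E] {μ : Measure E} {G : E → ℝ≥0∞} (hG : Measurable G)
    (ε : ℝ) :
    (∫⁻ z in ball 0 1, G z ∂μ) / ENNReal.ofReal ε ≤
      ∫⁻ z in ball 0 1, G z / ENNReal.ofReal (ε * ‖z‖) ∂μ := by
  rw [div_eq_mul_inv, ← lintegral_mul_const _ hG]
  refine setLIntegral_mono' measurableSet_ball fun z hz ↦ ?_
  rw [← div_eq_mul_inv]
  refine ENNReal.div_le_div_left ?_ _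
  rw [ENNReal.ofReal_mul' (norm_nonneg z)]
  exact mul_le_of_le_one_right' (ENNReal.ofReal_le_one.2 (mem_ball_zero_iff.1 hz).le)

section NormedSpace

variable {E : Type*} [NormedAddCommGroup E] [NormedSpace ℝ E]

theorem preimage_sub_left_ball_half_smul (k : E) (r : ℝ) :
    (k - ·) ⁻¹' ball ((2 : ℝ)⁻¹ • k) r = ball ((2 : ℝ)⁻¹ • k) r := by
  ext z
  simp only [mem_preimage, mem_ball, dist_eq_norm]
  rw [← norm_neg, show -(k - z - (2 : ℝ)⁻¹ • k) = z - (2 : ℝ)⁻¹ • k by module]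

variable [MeasurableSpace E] [BorelSpace E] [FiniteDimensional ℝ E] (μ : Measure E)
  [μ.IsAddHaarMeasure]

theorem mul_measure_ball_le_of_le_mul_add {G : E → ℝ≥0∞} (hG : Measurable G) {k : E}
    (hk : ‖k‖ ≤ 1) {C : ℝ≥0∞} (hGk : ∀ z, G k ≤ C * (G (k - z) + G z)) :
    G k * μ (ball 0 1) ≤ 2 ^ finrank ℝ E * (2 * C) * ∫⁻ z in ball 0 1, G z ∂μ := by
  set B := ball ((2 : ℝ)⁻¹ • k) 2⁻¹
  have hB_sub : B ⊆ ball 0 1 := by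
    refine ball_subset_ball' ?_
    rw [dist_zero_right, norm_smul]
    norm_num
    linarith
  have hμB : μ (ball 0 1) = 2 ^ finrank ℝ E * μ B := by
    rw [Measure.addHaar_ball_of_pos μ _ (by norm_num : (0 : ℝ) < 2⁻¹),
      ENNReal.ofReal_pow (by norm_num), ENNReal.ofReal_inv_of_pos two_pos, ← ENNReal.inv_pow,
      ENNReal.ofReal_ofNat, ENNReal.mul_inv_cancel_left (by simp) (by simp)]
  have hB_avg := mul_measure_le_two_mul_setLIntegral (μ := μ) (hG.const_mul C) measurableSet_ball
    (preimage_sub_left_ball_half_smul k 2⁻¹) fun z _ ↦ (hGk z).trans_eq (mul_add _ _ _)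
  calc G k * μ (ball 0 1) = 2 ^ finrank ℝ E * (G k * μ B) := by rw [hμB]; ring
    _ ≤ 2 ^ finrank ℝ E * (2 * ∫⁻ z in B, C * G z ∂μ) := by gcongr
    _ = 2 ^ finrank ℝ E * (2 * C) * ∫⁻ z in B, G z ∂μ := by
        rw [lintegral_const_mul _ hG]; ring
    _ ≤ _ := by gcongr

end NormedSpace

end MeasureTheory

theorem ENNReal.ofReal_two_rpow_natCast_add (n : ℕ) (q : ℝ) :
    ENNReal.ofReal (2 ^ ((n : ℝ) + q)) = 2 ^ n * 2 ^ q := by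
  rw [Real.rpow_add two_pos, ENNReal.ofReal_mul (by positivity), Real.rpow_natCast,
    ENNReal.ofReal_pow zero_le_two, ← ENNReal.ofReal_rpow_of_pos two_pos, ENNReal.ofReal_ofNat]

theorem stmt2_general (N d : ℕ) (q : ℝ) (hq : 1 ≤ q)
    (u : EuclideanSpace ℝ (Fin N) → EuclideanSpace ℝ (Fin d))
    (hu : MemLp u (ENNReal.ofReal q) volume)
    (ε : ℝ)
    (k : EuclideanSpace ℝ (Fin N)) (hk : ‖k‖ = 1) :
    (∫⁻ x, ENNReal.ofReal (‖u (x + ε • k) - u x‖ ^ q)) / ENNReal.ofReal ε ≤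
      (ENNReal.ofReal ((2 : ℝ) ^ ((N : ℝ) + q)) /
          volume (ball (0 : EuclideanSpace ℝ (Fin N)) 1)) *
        ∫⁻ z in ball (0 : EuclideanSpace ℝ (Fin N)) 1,
          (∫⁻ x, ENNReal.ofReal (‖u (x + ε • z) - u x‖ ^ q)) /
            ENNReal.ofReal (ε * ‖z‖) := by
  obtain ⟨v, hv, huv⟩ := hu.aestronglyMeasurable
  set G := fun w ↦ diffLIntegral volume q v (ε • w)
  change diffLIntegral volume q u (ε • k) / _ ≤
    _ * ∫⁻ z in _, diffLIntegral volume q u (ε • z) / _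
  rw [diffLIntegral_congr_ae huv]
  have hG : Measurable G := (measurable_diffLIntegral hv).comp (measurable_const_smul ε)
  have hGk (z) : G k ≤ 2 ^ (q - 1) * (G (k - z) + G z) := by
    simpa only [G, ← smul_add, sub_add_cancel] using
      diffLIntegral_add_le hq hv (ε • (k - z)) (ε • z)
  have hball := mul_measure_ball_le_of_le_mul_add volume hG hk.le hGk
  have htwo : (2 : ℝ≥0∞) * 2 ^ (q - 1) = 2 ^ q := by
    simpa using (ENNReal.rpow_add 1 (q - 1) two_ne_zero ENNReal.ofNat_ne_top).symm
  rw [finrank_euclideanSpace_fin, htwo, ← ENNReal.ofReal_two_rpow_natCast_add] at hball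
  have hGk_le : G k ≤ ENNReal.ofReal (2 ^ ((N : ℝ) + q)) /
      volume (ball (0 : EuclideanSpace ℝ (Fin N)) 1) * ∫⁻ z in ball 0 1, G z := by
    rw [← ENNReal.mul_div_right_comm, ENNReal.le_div_iff_mul_le
      (Or.inl (measure_ball_pos _ _ one_pos).ne') (Or.inl measure_ball_lt_top.ne)]
    exact hball
  calc G k / ENNReal.ofReal ε
      ≤ ENNReal.ofReal (2 ^ ((N : ℝ) + q)) / volume (ball (0 : EuclideanSpace ℝ (Fin N)) 1) *
          ((∫⁻ z in ball 0 1, G z) / ENNReal.ofReal ε) := by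
        rw [← mul_div_assoc]
        exact ENNReal.div_le_div_right hGk_le _
    _ ≤ _ := by gcongr; exact setLIntegral_ball_div_ofReal_le hG ε

theorem stmt2 (N d : ℕ) (q : ℝ) (hq : 1 ≤ q)
    (u : EuclideanSpace ℝ (Fin N) → EuclideanSpace ℝ (Fin d))
    (hu : MemLp u (ENNReal.ofReal q) volume)
    (ε : ℝ) (hε : 0 < ε)
    (k : EuclideanSpace ℝ (Fin N)) (hk : ‖k‖ = 1) :
    (∫⁻ x, ENNReal.ofReal (‖u (x + ε • k) - u x‖ ^ q)) / ENNReal.ofReal ε ≤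
      (ENNReal.ofReal ((2 : ℝ) ^ ((N : ℝ) + q)) /
          volume (ball (0 : EuclideanSpace ℝ (Fin N)) 1)) *
        ∫⁻ z in ball (0 : EuclideanSpace ℝ (Fin N)) 1,
          (∫⁻ x, ENNReal.ofReal (‖u (x + ε • z) - u x‖ ^ q)) /
            ENNReal.ofReal (ε * ‖z‖) :=
  stmt2_general N d q hq u hu ε k hk
end

section
/- Let $q>1$ and $u\in L^q(\mathbb{R}^N,\mathbb{R}^d)$. Then $u$ belongs to the Besov space $B^{1/q}_{q,\infty}(\mathbb{R}^N,\mathbb{R}^d)$, i.e. $\sup_{\rho>0}\sup_{|h|\le\rho}\int_{\mathbb{R}^N}\rho^{-1}|u(x+h)-u(x)|^q\,dx<\infty$, if and only if $$\limsup_{\varepsilon\to 0^+}\ \sup_{\vec k\in S^{N-1}}\int_{\mathbb{R}^N}\frac{1}{\varepsilon}\,\big|u(x+\varepsilon\vec k)-u(x)\big|^q\,dx<\infty.$$ -/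
/-!
Both quantities are controlled by the difference energy `F h = ∫ |u(x+h) - u(x)|^q dx`.
Taking `h = ε k` shows that the directional limsup is at most the Besov supremum. Conversely,
a bound on the limsup gives `F h ≤ C ‖h‖` for `0 < ‖h‖ < ε₀`, while for `‖h‖ ≥ ε₀` the
translation invariance of Lebesgue measure and Minkowski's inequality give the uniform bound
`F h ≤ (2 ‖u‖_q)^q`, hence `F h / ρ ≤ (2 ‖u‖_q)^q / ε₀` whenever `ε₀ ≤ ‖h‖ ≤ ρ`.
-/

open MeasureTheory Set Filter Topology
open scoped ENNReal

section DifferenceQuotient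

variable {E : Type*} [NormedAddCommGroup E] [NormedSpace ℝ E] (F : E → ℝ≥0∞)

theorem limsup_iSup_sphere_div_le_iSup_ball_div :
    limsup (fun ε : ℝ => ⨆ (k : E) (_ : ‖k‖ = 1), F (ε • k) / ENNReal.ofReal ε) (𝓝[>] 0) ≤
      ⨆ (ρ : ℝ) (_ : 0 < ρ) (h : E) (_ : ‖h‖ ≤ ρ), F h / ENNReal.ofReal ρ := by
  refine limsup_le_of_le (by isBoundedDefault) ?_
  filter_upwards [self_mem_nhdsWithin] with ε (hε : 0 < ε)
  refine iSup₂_le fun k hk => le_iSup₂_of_le ε hε (le_iSup₂_of_le (ε • k) ?_ le_rfl)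
  rw [norm_smul, hk, mul_one, Real.norm_of_nonneg hε.le]

theorem div_ofReal_norm_le_iSup_sphere {h : E} (hh : h ≠ 0) :
    F h / ENNReal.ofReal ‖h‖ ≤
      ⨆ (k : E) (_ : ‖k‖ = 1), F (‖h‖ • k) / ENNReal.ofReal ‖h‖ := by
  refine le_iSup₂_of_le (‖h‖⁻¹ • h) (norm_smul_inv_norm hh) ?_
  rw [smul_inv_smul₀ (norm_ne_zero_iff.2 hh)]

theorem iSup_ball_div_le_max {C M : ℝ≥0∞} {ε₀ : ℝ} (hF0 : F 0 = 0) (hFM : ∀ h, F h ≤ M)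
    (hC : ∀ ε ∈ Ioo 0 ε₀, ⨆ (k : E) (_ : ‖k‖ = 1), F (ε • k) / ENNReal.ofReal ε ≤ C) :
    ⨆ (ρ : ℝ) (_ : 0 < ρ) (h : E) (_ : ‖h‖ ≤ ρ), F h / ENNReal.ofReal ρ ≤
      max C (M / ENNReal.ofReal ε₀) := by
  refine iSup₂_le fun ρ _ => iSup₂_le fun h hhρ => ?_
  rcases eq_or_ne h 0 with rfl | hh
  · simp [hF0]
  rcases lt_or_ge ‖h‖ ε₀ with hsmall | hlarge
  · calc F h / ENNReal.ofReal ρ ≤ F h / ENNReal.ofReal ‖h‖ :=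
          ENNReal.div_le_div_left (ENNReal.ofReal_le_ofReal hhρ) _
      _ ≤ C := (div_ofReal_norm_le_iSup_sphere F hh).trans
          (hC _ ⟨norm_pos_iff.2 hh, hsmall⟩)
      _ ≤ _ := le_max_left _ _
  · calc F h / ENNReal.ofReal ρ ≤ M / ENNReal.ofReal ε₀ :=
          ENNReal.div_le_div (hFM h) (ENNReal.ofReal_le_ofReal (hlarge.trans hhρ))
      _ ≤ _ := le_max_right _ _

theorem iSup_ball_div_lt_top_iff_limsup_lt_top {M : ℝ≥0∞} (hM : M ≠ ⊤) (hF0 : F 0 = 0)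
    (hFM : ∀ h, F h ≤ M) :
    ⨆ (ρ : ℝ) (_ : 0 < ρ) (h : E) (_ : ‖h‖ ≤ ρ), F h / ENNReal.ofReal ρ < ⊤ ↔
      limsup (fun ε : ℝ => ⨆ (k : E) (_ : ‖k‖ = 1), F (ε • k) / ENNReal.ofReal ε)
        (𝓝[>] 0) < ⊤ := by
  refine ⟨(limsup_iSup_sphere_div_le_iSup_ball_div F).trans_lt, fun hL => ?_⟩
  obtain ⟨C, hLC, hC⟩ := exists_between hL
  obtain ⟨ε₀, hε₀, hbound⟩ :=
    (nhdsGT_basis (0 : ℝ)).eventually_iff.1 (eventually_lt_of_limsup_lt hLC)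
  refine (iSup_ball_div_le_max F hF0 hFM fun ε hε => (hbound hε).le).trans_lt ?_
  exact max_lt hC (ENNReal.div_lt_top hM (ENNReal.ofReal_pos.2 hε₀).ne')

end DifferenceQuotient

theorem lintegral_ofReal_norm_rpow_eq_eLpNorm_rpow {α G : Type*} [MeasurableSpace α]
    [NormedAddCommGroup G] {μ : Measure α} (f : α → G) {q : ℝ} (hq : 0 < q) :
    ∫⁻ x, ENNReal.ofReal (‖f x‖ ^ q) ∂μ = eLpNorm f (ENNReal.ofReal q) μ ^ q := by
  rw [eLpNorm_eq_eLpNorm' (ENNReal.ofReal_pos.2 hq).ne' ENNReal.ofReal_ne_top,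
    ENNReal.toReal_ofReal hq.le, ← lintegral_rpow_enorm_eq_rpow_eLpNorm' hq]
  simp_rw [← ENNReal.ofReal_rpow_of_nonneg (norm_nonneg _) hq.le, ofReal_norm]

theorem lintegral_ofReal_norm_sub_translate_rpow_le {E G : Type*} [MeasurableSpace E] [Add E]
    [MeasurableAdd E] [NormedAddCommGroup G] {μ : Measure E} [μ.IsAddRightInvariant]
    {u : E → G} (hu : AEStronglyMeasurable u μ) {q : ℝ} (hq : 1 ≤ q) (h : E) :
    ∫⁻ x, ENNReal.ofReal (‖u (x + h) - u x‖ ^ q) ∂μ ≤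
      (2 * eLpNorm u (ENNReal.ofReal q) μ) ^ q := by
  have htrans := measurePreserving_add_right μ h
  have hmin : eLpNorm (u ∘ (· + h) - u) (ENNReal.ofReal q) μ ≤
      eLpNorm u (ENNReal.ofReal q) μ + eLpNorm u (ENNReal.ofReal q) μ := by
    calc _ ≤ eLpNorm (u ∘ (· + h)) (ENNReal.ofReal q) μ + eLpNorm u (ENNReal.ofReal q) μ :=
          eLpNorm_sub_le (hu.comp_measurePreserving htrans) hu (ENNReal.one_le_ofReal.2 hq)
      _ = _ := by rw [eLpNorm_comp_measurePreserving hu htrans]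
  rw [lintegral_ofReal_norm_rpow_eq_eLpNorm_rpow (fun x => u (x + h) - u x) (by linarith), two_mul]
  exact ENNReal.rpow_le_rpow hmin (by linarith)

theorem stmt4 (N d : ℕ) (q : ℝ) (hq : 1 < q)
    (u : EuclideanSpace ℝ (Fin N) → EuclideanSpace ℝ (Fin d))
    (hu : MemLp u (ENNReal.ofReal q) volume) :
    (⨆ (ρ : ℝ) (_ : 0 < ρ) (h : EuclideanSpace ℝ (Fin N)) (_ : ‖h‖ ≤ ρ),
        (∫⁻ x, ENNReal.ofReal (‖u (x + h) - u x‖ ^ q)) / ENNReal.ofReal ρ) < ⊤ ↔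
      Filter.limsup (fun ε : ℝ =>
        ⨆ (k : EuclideanSpace ℝ (Fin N)) (_ : ‖k‖ = 1),
          (∫⁻ x, ENNReal.ofReal (‖u (x + ε • k) - u x‖ ^ q)) /
            ENNReal.ofReal ε) (𝓝[>] (0 : ℝ)) < ⊤ := by
  have hq0 : 0 < q := one_pos.trans hq
  refine iSup_ball_div_lt_top_iff_limsup_lt_top _
    (M := (2 * eLpNorm u (ENNReal.ofReal q) volume) ^ q) ?_ ?_ (lintegral_ofReal_norm_sub_translate_rpow_le hu.1 hq.le)
  · exact ENNReal.rpow_ne_top_of_nonneg hq0.le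
      (ENNReal.mul_ne_top ENNReal.ofNat_ne_top hu.eLpNorm_lt_top.ne)
  · simp [Real.zero_rpow hq0.ne']
end

section
/- Let $\Omega\subset\mathbb{R}^N$ be open, $q\ge 1$, $u\in L^q(\Omega,\mathbb{R}^d)$, and $\varepsilon>0$. Let $Q_\varepsilon(x_1),\dots,Q_\varepsilon(x_m)$ be pairwise disjoint open cubes of side $\varepsilon$ contained in $\Omega$, with $m\le \varepsilon^{-(N-1)}$. Then $$\sum_{j=1}^m \varepsilon^{N-1}\Big(\frac{1}{\varepsilon^{2N}}\int_{Q_\varepsilon(x_j)}\int_{Q_\varepsilon(x_j)}|u(y)-u(x)|\,dy\,dx\Big)\ \le\ N^{\frac{N+1}{2q}}\Big(\int_\Omega\int_{B_{\varepsilon\sqrt N}(x)\cap\Omega}\frac{1}{(\varepsilon\sqrt N)^N}\,\frac{|u(y)-u(x)|^q}{|y-x|}\,dy\,dx\Big)^{1/q}.$$ -/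
/-
On each cube `Q`, Hölder's inequality applied to both integrals gives
`∫_Q ∫_Q |u(y) - u(x)| ≤ ε^{2N(1-1/q)} (∫_Q ∫_Q |u(y) - u(x)|^q)^{1/q}`. Since `Q` has diameter
`ε√N`, we have `Q ⊆ B_{ε√N}(x) ∩ Ω` for `x ∈ Q` and the kernel `1 / ((ε√N)^N |y - x|)` is at least
`(ε√N)^{-(N+1)}` there, which turns the right-hand side into a piece of the nonlocal energy at the
cost of the factor `N^{(N+1)/(2q)}`. The leftover power `ε^{(N-1)(1-1/q)}` is absorbed by Hölder's
inequality for the sum over the `m ≤ ε^{-(N-1)}` cubes, and the pieces add up to at most the full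
energy because the cubes are disjoint subsets of `Ω`.
-/

open MeasureTheory Metric Set Filter Topology
open scoped ENNReal

theorem lintegral_le_measure_univ_rpow_mul_lintegral_rpow {α : Type*} [MeasurableSpace α]
    {μ : Measure α} {f : α → ℝ≥0∞} (hf : AEMeasurable f μ) {q : ℝ} (hq : 1 ≤ q) :
    ∫⁻ a, f a ∂μ ≤ μ univ ^ (1 - 1 / q) * (∫⁻ a, f a ^ q ∂μ) ^ (1 / q) := by
  rcases hq.eq_or_lt with rfl | hq
  · simp
  have holder := ENNReal.lintegral_mul_le_Lp_mul_Lq μ (Real.HolderConjugate.conjExponent hq) hf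
    (aemeasurable_const (b := (1 : ℝ≥0∞)))
  have hexp : q.conjExponent⁻¹ = 1 - q⁻¹ := by
    linarith [(Real.HolderConjugate.conjExponent hq).inv_add_inv_eq_one]
  simpa [hexp, mul_comm] using holder

theorem lintegral_lintegral_le_measure_univ_rpow_mul {α β : Type*} [MeasurableSpace α]
    [MeasurableSpace β] {μ : Measure α} {ν : Measure β} [SFinite ν] {f : α → β → ℝ≥0∞}
    (hf : AEMeasurable (Function.uncurry f) (μ.prod ν)) {q : ℝ} (hq : 1 ≤ q) :
    ∫⁻ x, ∫⁻ y, f x y ∂ν ∂μ ≤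
      μ univ ^ (1 - 1 / q) * ν univ ^ (1 - 1 / q) *
        (∫⁻ x, ∫⁻ y, f x y ^ q ∂ν ∂μ) ^ (1 / q) := by
  set F : α → ℝ≥0∞ := fun x => (∫⁻ y, f x y ^ q ∂ν) ^ (1 / q)
  have hF : AEMeasurable F μ := ((hf.pow_const q).lintegral_prod_right').pow_const _
  have hsection : ∀ᵐ x ∂μ, AEMeasurable (f x) ν :=
    hf.aestronglyMeasurable.prodMk_left.mono fun x hx => hx.aemeasurable
  calc ∫⁻ x, ∫⁻ y, f x y ∂ν ∂μ ≤ ∫⁻ x, ν univ ^ (1 - 1 / q) * F x ∂μ :=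
        lintegral_mono_ae (hsection.mono fun x hx =>
          lintegral_le_measure_univ_rpow_mul_lintegral_rpow hx hq)
    _ = ν univ ^ (1 - 1 / q) * ∫⁻ x, F x ∂μ := lintegral_const_mul'' _ hF
    _ ≤ ν univ ^ (1 - 1 / q) * (μ univ ^ (1 - 1 / q) * (∫⁻ x, F x ^ q ∂μ) ^ (1 / q)) := by
        gcongr; exact lintegral_le_measure_univ_rpow_mul_lintegral_rpow hF hq
    _ = _ := by
        simp only [F, ← ENNReal.rpow_mul, one_div_mul_cancel (by positivity : q ≠ 0),
          ENNReal.rpow_one]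
        ring

theorem rpow_mul_sum_rpow_le {ι : Type*} [Fintype ι] (a : ι → ℝ≥0∞) {q : ℝ} (hq : 1 ≤ q)
    {t : ℝ≥0∞} (ht : Fintype.card ι * t ≤ 1) :
    t ^ (1 - 1 / q) * ∑ j, a j ^ (1 / q) ≤ (∑ j, a j) ^ (1 / q) := by
  have hexp : 0 ≤ 1 - 1 / q := sub_nonneg.2 ((div_le_one (by positivity)).2 hq)
  let _ : MeasurableSpace ι := ⊤
  have holder := lintegral_le_measure_univ_rpow_mul_lintegral_rpow (μ := Measure.count)
    (f := fun j => a j ^ (1 / q)) measurable_from_top.aemeasurable hq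
  simp only [lintegral_count, tsum_fintype, ← ENNReal.rpow_mul,
    one_div_mul_cancel (by positivity : q ≠ 0), ENNReal.rpow_one] at holder
  rw [← Finset.coe_univ, Measure.count_apply_finset, Finset.card_univ] at holder
  calc t ^ (1 - 1 / q) * ∑ j, a j ^ (1 / q)
      ≤ t ^ (1 - 1 / q) * (Fintype.card ι ^ (1 - 1 / q) * (∑ j, a j) ^ (1 / q)) := by
        gcongr
    _ = (Fintype.card ι * t) ^ (1 - 1 / q) * (∑ j, a j) ^ (1 / q) := by
        rw [ENNReal.mul_rpow_of_nonneg _ _ hexp]; ring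
    _ ≤ (∑ j, a j) ^ (1 / q) :=
        mul_le_of_le_one_left zero_le (ENNReal.rpow_le_one ht hexp)

theorem setLIntegral_setLIntegral_le_const_mul_div {α : Type*} [MeasurableSpace α]
    {μ : Measure α} {Q : Set α} (hQ : MeasurableSet Q) {S : α → Set α}
    (hQS : ∀ x ∈ Q, Q ⊆ S x) (G w : α → α → ℝ≥0∞) {K : ℝ≥0∞} (hK0 : K ≠ 0) (hKt : K ≠ ⊤)
    (hw : ∀ x ∈ Q, ∀ y ∈ Q, w x y ≤ K) :
    ∫⁻ x in Q, ∫⁻ y in Q, G x y ∂μ ∂μ ≤ K * ∫⁻ x in Q, ∫⁻ y in S x, G x y / w x y ∂μ ∂μ := by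
  have hpointwise : ∀ x ∈ Q, ∀ y ∈ Q, G x y ≤ K * (G x y / w x y) := fun x hx y hy =>
    calc G x y = K * (G x y / K) := (ENNReal.mul_div_cancel hK0 hKt).symm
      _ ≤ K * (G x y / w x y) := by gcongr; exact hw x hx y hy
  calc ∫⁻ x in Q, ∫⁻ y in Q, G x y ∂μ ∂μ
      ≤ ∫⁻ x in Q, K * ∫⁻ y in S x, G x y / w x y ∂μ ∂μ := setLIntegral_mono' hQ fun x hx =>
        calc ∫⁻ y in Q, G x y ∂μ ≤ ∫⁻ y in Q, K * (G x y / w x y) ∂μ :=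
              setLIntegral_mono' hQ (hpointwise x hx)
          _ = K * ∫⁻ y in Q, G x y / w x y ∂μ := lintegral_const_mul' _ _ hKt
          _ ≤ K * ∫⁻ y in S x, G x y / w x y ∂μ := by gcongr; exact hQS x hx
    _ = K * ∫⁻ x in Q, ∫⁻ y in S x, G x y / w x y ∂μ ∂μ := lintegral_const_mul' _ _ hKt

section Cube

variable {ι : Type*}

def cube (c : EuclideanSpace ℝ ι) (ε : ℝ) : Set (EuclideanSpace ℝ ι) :=
  {z | ∀ i, |z i - c i| < ε / 2}

theorem cube_eq_preimage_pi (c : EuclideanSpace ℝ ι) (ε : ℝ) :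
    cube c ε = (MeasurableEquiv.toLp 2 (ι → ℝ)).symm ⁻¹'
      univ.pi fun i => Ioo (c i - ε / 2) (c i + ε / 2) := by
  ext z
  simp only [cube, mem_ofPred_eq, MeasurableEquiv.coe_toLp_symm, mem_preimage, mem_univ_pi,
    mem_Ioo, abs_sub_lt_iff]
  exact forall_congr' fun i =>
    ⟨fun h => ⟨by linarith, by linarith⟩, fun h => ⟨by linarith, by linarith⟩⟩

variable [Fintype ι]

theorem measurableSet_cube (c : EuclideanSpace ℝ ι) (ε : ℝ) : MeasurableSet (cube c ε) := by
  rw [cube_eq_preimage_pi]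
  exact (MeasurableEquiv.toLp 2 (ι → ℝ)).symm.measurable
    (MeasurableSet.univ_pi fun _ => measurableSet_Ioo)

theorem volume_cube (c : EuclideanSpace ℝ ι) (ε : ℝ) :
    volume (cube c ε) = ENNReal.ofReal ε ^ Fintype.card ι := by
  rw [cube_eq_preimage_pi,
    (EuclideanSpace.volume_preserving_symm_measurableEquiv_toLp ι).measure_preimage
      (MeasurableSet.univ_pi fun _ => measurableSet_Ioo).nullMeasurableSet,
    Real.volume_pi_Ioo]
  simp

theorem dist_lt_of_mem_cube [Nonempty ι] {c x y : EuclideanSpace ℝ ι} {ε : ℝ} (hε : 0 < ε)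
    (hx : x ∈ cube c ε) (hy : y ∈ cube c ε) : dist x y < ε * √(Fintype.card ι) := by
  have hcoord : ∀ i, dist (x i) (y i) ^ 2 < ε ^ 2 := fun i => by
    have := abs_sub_lt_iff.1 (hx i)
    have := abs_sub_lt_iff.1 (hy i)
    rw [Real.dist_eq, sq_lt_sq, abs_of_pos hε, abs_abs, abs_sub_lt_iff]
    constructor <;> linarith
  calc dist x y = √(∑ i, dist (x i) (y i) ^ 2) := EuclideanSpace.dist_eq x y
    _ < √(∑ _i : ι, ε ^ 2) := Real.sqrt_lt_sqrt (by positivity)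
        (Finset.sum_lt_sum_of_nonempty Finset.univ_nonempty fun i _ => hcoord i)
    _ = ε * √(Fintype.card ι) := by
        rw [Finset.sum_const, Finset.card_univ, nsmul_eq_mul, Real.sqrt_mul (by positivity),
          Real.sqrt_sq hε.le, mul_comm]

end Cube

theorem setLIntegral_setLIntegral_cube_norm_sub_le {ι E : Type*} [Fintype ι] [Nonempty ι]
    [NormedAddCommGroup E] {Ω : Set (EuclideanSpace ℝ ι)} {u : EuclideanSpace ℝ ι → E}
    (hu : AEStronglyMeasurable u (volume.restrict Ω)) {c : EuclideanSpace ℝ ι} {ε : ℝ}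
    (hε : 0 < ε) (hc : cube c ε ⊆ Ω) {q : ℝ} (hq : 1 ≤ q) :
    ∫⁻ x in cube c ε, ∫⁻ y in cube c ε, ENNReal.ofReal ‖u y - u x‖ ≤
      (ENNReal.ofReal ε ^ Fintype.card ι) ^ (2 * (1 - 1 / q)) *
        (ENNReal.ofReal ((ε * √(Fintype.card ι)) ^ (Fintype.card ι : ℝ)) *
            ENNReal.ofReal (ε * √(Fintype.card ι)) *
          ∫⁻ x in cube c ε, ∫⁻ y in Ω ∩ ball x (ε * √(Fintype.card ι)),
            ENNReal.ofReal (‖u y - u x‖ ^ q) /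
              (ENNReal.ofReal ((ε * √(Fintype.card ι)) ^ (Fintype.card ι : ℝ)) *
                ENNReal.ofReal (dist x y))) ^ (1 / q) := by
  set n := Fintype.card ι
  set r := ε * √(n : ℝ)
  have hr : 0 < r := mul_pos hε (Real.sqrt_pos.2 (by exact_mod_cast Fintype.card_pos))
  set D := ENNReal.ofReal (r ^ (n : ℝ))
  have hD : D ≠ 0 := (ENNReal.ofReal_pos.2 (Real.rpow_pos_of_pos hr _)).ne'
  have huQ := hu.mono_measure (Measure.restrict_mono hc le_rfl)
  have holder := lintegral_lintegral_le_measure_univ_rpow_mul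
    (f := fun x y => ENNReal.ofReal ‖u y - u x‖)
    (huQ.comp_snd.sub huQ.comp_fst).norm.aemeasurable.ennreal_ofReal hq
  have hpow : ∀ x y, ENNReal.ofReal ‖u y - u x‖ ^ q = ENNReal.ofReal (‖u y - u x‖ ^ q) :=
    fun x y => ENNReal.ofReal_rpow_of_nonneg (norm_nonneg _) (by linarith)
  have hvol : (volume.restrict (cube c ε)) univ ^ (1 - 1 / q) *
      (volume.restrict (cube c ε)) univ ^ (1 - 1 / q) =
      (ENNReal.ofReal ε ^ n) ^ (2 * (1 - 1 / q)) := by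
    have : 0 ≤ 1 - 1 / q := sub_nonneg.2 ((div_le_one (by positivity)).2 hq)
    rw [Measure.restrict_apply_univ, volume_cube, two_mul, ENNReal.rpow_add_of_nonneg _ _ this this]
  have hweight := setLIntegral_setLIntegral_le_const_mul_div (μ := volume)
    (measurableSet_cube c ε) (S := fun x => Ω ∩ ball x r)
    (fun x hx y hy => ⟨hc hy, by rw [mem_ball, dist_comm]; exact dist_lt_of_mem_cube hε hx hy⟩)
    (fun x y => ENNReal.ofReal (‖u y - u x‖ ^ q)) (fun x y => D * ENNReal.ofReal (dist x y))
    (mul_ne_zero hD (ENNReal.ofReal_pos.2 hr).ne') (by finiteness)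
    (fun x hx y hy => by gcongr; exact (dist_lt_of_mem_cube hε hx hy).le)
  simp only [hpow, hvol] at holder
  exact holder.trans (mul_le_mul_right (ENNReal.rpow_le_rpow hweight (by positivity)) _)

theorem cube_scaling_identity {ε q : ℝ} {N : ℕ} (hε : 0 < ε) (hN : 0 < N) (hq : 1 ≤ q)
    (I : ℝ≥0∞) :
    ENNReal.ofReal (ε ^ ((N : ℝ) - 1)) *
        ((ENNReal.ofReal ε ^ N) ^ (2 * (1 - 1 / q)) *
          (ENNReal.ofReal ((ε * √N) ^ (N : ℝ)) * ENNReal.ofReal (ε * √N) * I) ^ (1 / q) /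
          ENNReal.ofReal (ε ^ (2 * (N : ℝ)))) =
      ENNReal.ofReal (ε ^ ((N : ℝ) - 1)) ^ (1 - 1 / q) *
        ENNReal.ofReal ((N : ℝ) ^ (((N : ℝ) + 1) / (2 * q))) * I ^ (1 / q) := by
  have hq0 : 0 < q := by linarith
  have h1q : 0 ≤ 1 - 1 / q := sub_nonneg.2 ((div_le_one hq0).2 hq)
  have hn : (0 : ℝ) < N := by exact_mod_cast hN
  have hs : 0 < √(N : ℝ) := Real.sqrt_pos.2 hn
  -- both sides are exponentials of the same linear combination of `log ε` and `log N`
  have hreal : ε ^ ((N : ℝ) - 1) * ((ε ^ N) ^ (2 * (1 - 1 / q)) *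
      ((ε * √N) ^ (N : ℝ) * (ε * √N)) ^ (1 / q) / ε ^ (2 * (N : ℝ))) =
      (ε ^ ((N : ℝ) - 1)) ^ (1 - 1 / q) * (N : ℝ) ^ (((N : ℝ) + 1) / (2 * q)) := by
    rw [← Real.exp_log (by positivity : 0 < ε ^ ((N : ℝ) - 1) * ((ε ^ N) ^ (2 * (1 - 1 / q)) *
        ((ε * √N) ^ (N : ℝ) * (ε * √N)) ^ (1 / q) / ε ^ (2 * (N : ℝ)))),
      ← Real.exp_log (by positivity :
        0 < (ε ^ ((N : ℝ) - 1)) ^ (1 - 1 / q) * (N : ℝ) ^ (((N : ℝ) + 1) / (2 * q)))]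
    congr 1
    rw [Real.log_mul (by positivity) (by positivity), Real.log_div (by positivity) (by positivity),
      Real.log_mul (by positivity) (by positivity), Real.log_mul (by positivity) (by positivity)]
    simp only [Real.log_rpow (by positivity : 0 < ε), Real.log_rpow (by positivity : 0 < ε ^ N),
      Real.log_rpow (by positivity : 0 < ε ^ ((N : ℝ) - 1)), Real.log_rpow hn, Real.log_pow,
      Real.log_rpow (by positivity : 0 < (ε * √N) ^ (N : ℝ) * (ε * √N)),
      Real.log_mul (by positivity : (ε * √N) ^ (N : ℝ) ≠ 0) (by positivity : ε * √N ≠ 0),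
      Real.log_rpow (by positivity : 0 < ε * √N), Real.log_mul hε.ne' hs.ne',
      Real.log_sqrt hn.le]
    field_simp
    ring
  rw [← ENNReal.ofReal_mul (by positivity), ENNReal.mul_rpow_of_nonneg _ _ (by positivity),
    ENNReal.ofReal_rpow_of_nonneg (by positivity) (by positivity), ← ENNReal.ofReal_pow hε.le,
    ENNReal.ofReal_rpow_of_nonneg (by positivity) (by positivity),
    ENNReal.ofReal_rpow_of_nonneg (by positivity) h1q, ← mul_assoc, ENNReal.mul_div_right_comm,
    ← ENNReal.ofReal_mul (by positivity), ← ENNReal.ofReal_div_of_pos (by positivity),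
    ← mul_assoc, ← ENNReal.ofReal_mul (by positivity), hreal, ENNReal.ofReal_mul (by positivity)]

theorem cube_mean_oscillation_le {N : ℕ} {E : Type*} [NormedAddCommGroup E]
    {Ω : Set (EuclideanSpace ℝ (Fin N))} {u : EuclideanSpace ℝ (Fin N) → E}
    (hu : AEStronglyMeasurable u (volume.restrict Ω)) {c : EuclideanSpace ℝ (Fin N)} {ε : ℝ}
    (hε : 0 < ε) (hc : cube c ε ⊆ Ω) {q : ℝ} (hq : 1 ≤ q) :
    ENNReal.ofReal (ε ^ ((N : ℝ) - 1)) *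
        ((∫⁻ x in cube c ε, ∫⁻ y in cube c ε, ENNReal.ofReal ‖u y - u x‖) /
          ENNReal.ofReal (ε ^ (2 * (N : ℝ)))) ≤
      ENNReal.ofReal (ε ^ ((N : ℝ) - 1)) ^ (1 - 1 / q) *
        ENNReal.ofReal ((N : ℝ) ^ (((N : ℝ) + 1) / (2 * q))) *
        (∫⁻ x in cube c ε, ∫⁻ y in Ω ∩ ball x (ε * √N),
          ENNReal.ofReal (‖u y - u x‖ ^ q) /
            (ENNReal.ofReal ((ε * √N) ^ (N : ℝ)) * ENNReal.ofReal (dist x y))) ^ (1 / q) := by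
  rcases N.eq_zero_or_pos with rfl | hN
  · have hzero : ∀ x y : EuclideanSpace ℝ (Fin 0), ‖u y - u x‖ = 0 := fun x y => by
      rw [Subsingleton.elim y x, sub_self, norm_zero]
    simp only [hzero, ENNReal.ofReal_zero, lintegral_zero, ENNReal.zero_div, mul_zero, zero_le]
  have : Nonempty (Fin N) := ⟨⟨0, hN⟩⟩
  have hcube := setLIntegral_setLIntegral_cube_norm_sub_le hu hε hc hq
  simp only [Fintype.card_fin] at hcube
  rw [← cube_scaling_identity hε hN hq]
  exact mul_le_mul_right (ENNReal.div_le_div_right hcube _) _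

theorem stmt9_general (N d m : ℕ) (q : ℝ) (hq : 1 ≤ q)
    (Ω : Set (EuclideanSpace ℝ (Fin N)))
    (u : EuclideanSpace ℝ (Fin N) → EuclideanSpace ℝ (Fin d))
    (hu : MemLp u (ENNReal.ofReal q) (volume.restrict Ω))
    (ε : ℝ) (hε : 0 < ε)
    (c : Fin m → EuclideanSpace ℝ (Fin N))
    (hsub : ∀ j, {z : EuclideanSpace ℝ (Fin N) | ∀ i, |z i - c j i| < ε / 2} ⊆ Ω)
    (hdisj : ∀ j k, j ≠ k →
      Disjoint {z : EuclideanSpace ℝ (Fin N) | ∀ i, |z i - c j i| < ε / 2}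
        {z : EuclideanSpace ℝ (Fin N) | ∀ i, |z i - c k i| < ε / 2})
    (hm : (m : ℝ) ≤ ε ^ (-((N : ℝ) - 1))) :
    (∑ j : Fin m, ENNReal.ofReal (ε ^ ((N : ℝ) - 1)) *
        ((∫⁻ x in {z : EuclideanSpace ℝ (Fin N) | ∀ i, |z i - c j i| < ε / 2},
            ∫⁻ y in {z : EuclideanSpace ℝ (Fin N) | ∀ i, |z i - c j i| < ε / 2},
              ENNReal.ofReal ‖u y - u x‖) /
          ENNReal.ofReal (ε ^ (2 * (N : ℝ))))) ≤
      ENNReal.ofReal ((N : ℝ) ^ (((N : ℝ) + 1) / (2 * q))) *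
        (∫⁻ x in Ω, ∫⁻ y in Ω ∩ ball x (ε * Real.sqrt N),
            ENNReal.ofReal (‖u y - u x‖ ^ q) /
              (ENNReal.ofReal ((ε * Real.sqrt N) ^ (N : ℝ)) *
                ENNReal.ofReal (dist x y))) ^ (1 / q) := by
  set energy : EuclideanSpace ℝ (Fin N) → ℝ≥0∞ := fun x => ∫⁻ y in Ω ∩ ball x (ε * Real.sqrt N),
    ENNReal.ofReal (‖u y - u x‖ ^ q) /
      (ENNReal.ofReal ((ε * Real.sqrt N) ^ (N : ℝ)) * ENNReal.ofReal (dist x y))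
  have hcubes : ∑ j, ∫⁻ x in cube (c j) ε, energy x ≤ ∫⁻ x in Ω, energy x := by
    calc _ = ∫⁻ x in ⋃ j, cube (c j) ε, energy x := by
          rw [lintegral_iUnion (fun j => measurableSet_cube (c j) ε) hdisj, tsum_fintype]
      _ ≤ _ := lintegral_mono_set (iUnion_subset hsub)
  have hcount : (Fintype.card (Fin m) : ℝ≥0∞) * ENNReal.ofReal (ε ^ ((N : ℝ) - 1)) ≤ 1 := by
    rw [Fintype.card_fin, ← ENNReal.ofReal_natCast, ← ENNReal.ofReal_mul (Nat.cast_nonneg m),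
      ENNReal.ofReal_le_one]
    calc (m : ℝ) * ε ^ ((N : ℝ) - 1) ≤ ε ^ (-((N : ℝ) - 1)) * ε ^ ((N : ℝ) - 1) := by gcongr
      _ = 1 := by rw [← Real.rpow_add hε, neg_add_cancel, Real.rpow_zero]
  calc _ ≤ ∑ j, ENNReal.ofReal (ε ^ ((N : ℝ) - 1)) ^ (1 - 1 / q) *
        ENNReal.ofReal ((N : ℝ) ^ (((N : ℝ) + 1) / (2 * q))) *
          (∫⁻ x in cube (c j) ε, energy x) ^ (1 / q) :=
        Finset.sum_le_sum fun j _ => cube_mean_oscillation_le hu.1 hε (hsub j) hq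
    _ = ENNReal.ofReal ((N : ℝ) ^ (((N : ℝ) + 1) / (2 * q))) *
        (ENNReal.ofReal (ε ^ ((N : ℝ) - 1)) ^ (1 - 1 / q) *
          ∑ j, (∫⁻ x in cube (c j) ε, energy x) ^ (1 / q)) := by
        rw [Finset.mul_sum, Finset.mul_sum]; ring_nf
    _ ≤ _ := by
        gcongr
        exact (rpow_mul_sum_rpow_le _ hq hcount).trans
          (ENNReal.rpow_le_rpow hcubes (by positivity))

theorem stmt9 (N d m : ℕ) (q : ℝ) (hq : 1 ≤ q)
    (Ω : Set (EuclideanSpace ℝ (Fin N))) (hΩ : IsOpen Ω)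
    (u : EuclideanSpace ℝ (Fin N) → EuclideanSpace ℝ (Fin d))
    (hu : MemLp u (ENNReal.ofReal q) (volume.restrict Ω))
    (ε : ℝ) (hε : 0 < ε)
    (c : Fin m → EuclideanSpace ℝ (Fin N))
    (hsub : ∀ j, {z : EuclideanSpace ℝ (Fin N) | ∀ i, |z i - c j i| < ε / 2} ⊆ Ω)
    (hdisj : ∀ j k, j ≠ k →
      Disjoint {z : EuclideanSpace ℝ (Fin N) | ∀ i, |z i - c j i| < ε / 2}
        {z : EuclideanSpace ℝ (Fin N) | ∀ i, |z i - c k i| < ε / 2})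
    (hm : (m : ℝ) ≤ ε ^ (-((N : ℝ) - 1))) :
    (∑ j : Fin m, ENNReal.ofReal (ε ^ ((N : ℝ) - 1)) *
        ((∫⁻ x in {z : EuclideanSpace ℝ (Fin N) | ∀ i, |z i - c j i| < ε / 2},
            ∫⁻ y in {z : EuclideanSpace ℝ (Fin N) | ∀ i, |z i - c j i| < ε / 2},
              ENNReal.ofReal ‖u y - u x‖) /
          ENNReal.ofReal (ε ^ (2 * (N : ℝ))))) ≤
      ENNReal.ofReal ((N : ℝ) ^ (((N : ℝ) + 1) / (2 * q))) *
        (∫⁻ x in Ω, ∫⁻ y in Ω ∩ ball x (ε * Real.sqrt N),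
            ENNReal.ofReal (‖u y - u x‖ ^ q) /
              (ENNReal.ofReal ((ε * Real.sqrt N) ^ (N : ℝ)) *
                ENNReal.ofReal (dist x y))) ^ (1 / q) :=
  stmt9_general N d m q hq Ω u hu ε hε c hsub hdisj hm
end

section
/- Let $q\ge 1$ and let $f:\mathbb{R}\to\mathbb{R}^d$ be a function (defined everywhere) with finite $q$-variation $v_{q}(f):=\sup_n\sup_{x_1<\dots<x_{n+1}}\big(\sum_{k=1}^n|f(x_{k+1})-f(x_k)|^q\big)^{1/q}<\infty$. Then $$\bar A_{f,q}(\mathbb{R}):=\sup_{\varepsilon\in(0,1)}\int_{-1}^{1}\int_{\mathbb{R}}\frac{|f(x+\varepsilon z)-f(x)|^q}{\varepsilon|z|}\,dx\,dz\ \le\ 4\,\big(v_{q}(f)\big)^q.$$ -/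
open MeasureTheory Metric Set Filter Topology
open scoped ENNReal

noncomputable section

theorem lint_shift (g : ℝ → ℝ≥0∞) (c : ℝ) : ∫⁻ x, g (x + c) = ∫⁻ x, g x := by
  conv_rhs => rw [← map_add_right_eq_self volume c]
  exact (lintegral_map_equiv g (MeasurableEquiv.addRight c)).symm

theorem superadd {ι : Type*} (s : Finset ι) (g : ι → ℝ → ℝ≥0∞) (μ : Measure ℝ) :
    ∑ i ∈ s, ∫⁻ x, g i x ∂μ ≤ ∫⁻ x, ∑ i ∈ s, g i x ∂μ := by
  classical
  induction s using Finset.cons_induction with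
  | empty => simp
  | cons a s ha ih =>
      simp only [Finset.sum_cons]
      calc (∫⁻ x, g a x ∂μ) + ∑ i ∈ s, ∫⁻ x, g i x ∂μ
          ≤ (∫⁻ x, g a x ∂μ) + ∫⁻ x, ∑ i ∈ s, g i x ∂μ := by gcongr
        _ ≤ ∫⁻ x, g a x + ∑ i ∈ s, g i x ∂μ := le_lintegral_add _ _

theorem stmt11 (d : ℕ) (q : ℝ) (hq : 1 ≤ q)
    (f : ℝ → EuclideanSpace ℝ (Fin d))
    (V : ℝ≥0∞)
    (hV : V = ⨆ (n : ℕ) (x : Fin (n + 1) → ℝ) (_ : StrictMono x),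
        (∑ k : Fin n,
            ENNReal.ofReal (‖f (x k.succ) - f (x k.castSucc)‖ ^ q)) ^ (1 / q))
    (hfin : V ≠ ⊤) :
    (⨆ (ε : ℝ) (_ : ε ∈ Set.Ioo (0 : ℝ) 1),
        ∫⁻ z in Set.Ioo (-1 : ℝ) 1,
          (∫⁻ x : ℝ, ENNReal.ofReal (‖f (x + ε * z) - f x‖ ^ q)) /
            ENNReal.ofReal (ε * |z|)) ≤ 4 * V ^ q := by
  have hq0 : 0 < q := lt_of_lt_of_le one_pos hq
  -- variation bound for increasing sequences
  have hVar : ∀ (n : ℕ) (x : Fin (n + 1) → ℝ), StrictMono x →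
      (∑ k : Fin n, ENNReal.ofReal (‖f (x k.succ) - f (x k.castSucc)‖ ^ q)) ≤ V ^ q := by
    intro n x hx
    set S := ∑ k : Fin n, ENNReal.ofReal (‖f (x k.succ) - f (x k.castSucc)‖ ^ q) with hS
    have h1 : S ^ (1 / q) ≤ V := by
      rw [hV]
      exact le_iSup_of_le n (le_iSup_of_le x (le_iSup_of_le hx le_rfl))
    calc S = (S ^ (1 / q)) ^ q := by
            rw [← ENNReal.rpow_mul, one_div, inv_mul_cancel₀ hq0.ne', ENNReal.rpow_one]
      _ ≤ V ^ q := ENNReal.rpow_le_rpow h1 hq0.le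
  -- sum over any finite set of translated increments
  have key : ∀ (t h : ℝ), 0 < h → ∀ (s : Finset ℤ),
      ∑ k ∈ s, ENNReal.ofReal (‖f (t + k * h + h) - f (t + k * h)‖ ^ q) ≤ V ^ q := by
    intro t h hh s
    set N : ℕ := s.sup fun k => k.natAbs with hN
    set e : Fin (2 * N + 1) → ℤ := fun j => (j : ℤ) - N with he
    have hinj : Function.Injective e := by
      intro a b hab
      have : ((a : ℕ) : ℤ) = ((b : ℕ) : ℤ) := by simpa [he] using hab
      exact Fin.ext (by exact_mod_cast this)
    have hsub : s ⊆ Finset.image e Finset.univ := by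
      intro k hk
      have hk' : k.natAbs ≤ N := Finset.le_sup hk
      have h1 : -(N : ℤ) ≤ k ∧ k ≤ N := by omega
      refine Finset.mem_image.2 ⟨⟨(k + N).toNat, by omega⟩, Finset.mem_univ _, ?_⟩
      simp only [he]
      omega
    set x : Fin (2 * N + 1 + 1) → ℝ := fun i => t + (((i : ℕ) : ℤ) - N) * h with hx
    have hmono : StrictMono x := by
      intro a b hab
      simp only [hx]
      have : (((a : ℕ) : ℤ) : ℝ) < ((b : ℕ) : ℤ) := by exact_mod_cast hab
      nlinarith
    calc ∑ k ∈ s, ENNReal.ofReal (‖f (t + k * h + h) - f (t + k * h)‖ ^ q)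
        ≤ ∑ k ∈ Finset.image e Finset.univ,
            ENNReal.ofReal (‖f (t + k * h + h) - f (t + k * h)‖ ^ q) :=
          Finset.sum_le_sum_of_subset hsub
      _ = ∑ j : Fin (2 * N + 1),
            ENNReal.ofReal (‖f (t + e j * h + h) - f (t + e j * h)‖ ^ q) :=
          Finset.sum_image fun a _ b _ hab => hinj hab
      _ = ∑ j : Fin (2 * N + 1),
            ENNReal.ofReal (‖f (x j.succ) - f (x j.castSucc)‖ ^ q) := by
          refine Finset.sum_congr rfl fun j _ => ?_
          have h1 : x j.succ = t + e j * h + h := by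
            simp only [hx, he, Fin.val_succ]
            push_cast
            ring
          have h2 : x j.castSucc = t + e j * h := by
            simp only [hx, he, Fin.coe_castSucc]
            push_cast
            ring
          rw [h1, h2]
      _ ≤ V ^ q := hVar _ x hmono
  -- key integral bound for positive shift
  have main : ∀ h : ℝ, 0 < h →
      (∫⁻ x : ℝ, ENNReal.ofReal (‖f (x + h) - f x‖ ^ q)) ≤ ENNReal.ofReal h * V ^ q := by
    intro h hh
    set g : ℝ → ℝ≥0∞ := fun x => ENNReal.ofReal (‖f (x + h) - f x‖ ^ q) with hg
    have cover : (univ : Set ℝ) = ⋃ k : ℤ, Ico ((k : ℝ) * h) ((k : ℝ) * h + h) := by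
      ext y
      simp only [mem_univ, true_iff, mem_iUnion, mem_Ico]
      refine ⟨⌊y / h⌋, ?_, ?_⟩
      · calc ((⌊y / h⌋ : ℝ)) * h ≤ (y / h) * h :=
              mul_le_mul_of_nonneg_right (Int.floor_le _) hh.le
          _ = y := div_mul_cancel₀ y hh.ne'
      · have h1 : y / h < ⌊y / h⌋ + 1 := Int.lt_floor_add_one _
        have h2 : (y / h) * h = y := div_mul_cancel₀ y hh.ne'
        nlinarith
    calc (∫⁻ x, g x) = ∫⁻ x in (univ : Set ℝ), g x := by rw [Measure.restrict_univ]
      _ = ∫⁻ x in ⋃ k : ℤ, Ico ((k : ℝ) * h) ((k : ℝ) * h + h), g x := by rw [← cover]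
      _ ≤ ∑' k : ℤ, ∫⁻ x in Ico ((k : ℝ) * h) ((k : ℝ) * h + h), g x :=
          lintegral_iUnion_le _ _
      _ = ∑' k : ℤ, ∫⁻ x in Ico (0 : ℝ) h, g (x + k * h) := by
          refine tsum_congr fun k => ?_
          rw [← lintegral_indicator measurableSet_Ico,
            ← lintegral_indicator measurableSet_Ico,
            ← lint_shift (fun y => (Ico ((k : ℝ) * h) ((k : ℝ) * h + h)).indicator g y)
              ((k : ℝ) * h)]
          refine lintegral_congr fun y => ?_
          have hiff : y + (k : ℝ) * h ∈ Ico ((k : ℝ) * h) ((k : ℝ) * h + h) ↔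
              y ∈ Ico (0 : ℝ) h := by
            simp only [mem_Ico]
            constructor <;> intro hy <;> constructor <;> linarith [hy.1, hy.2]
          by_cases hy : y ∈ Ico (0 : ℝ) h
          · rw [Set.indicator_of_mem (hiff.2 hy), Set.indicator_of_mem hy]
          · rw [Set.indicator_of_notMem (fun hc => hy (hiff.1 hc)),
              Set.indicator_of_notMem hy]
      _ ≤ ENNReal.ofReal h * V ^ q := by
          rw [ENNReal.tsum_eq_iSup_sum]
          refine iSup_le fun s => ?_
          calc ∑ k ∈ s, ∫⁻ x in Ico (0 : ℝ) h, g (x + k * h)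
              ≤ ∫⁻ x in Ico (0 : ℝ) h, ∑ k ∈ s, g (x + k * h) :=
                superadd s (fun k x => g (x + k * h)) _
            _ ≤ ∫⁻ _ in Ico (0 : ℝ) h, V ^ q := by
                refine lintegral_mono fun x => ?_
                exact key x h hh s
            _ = volume (Ico (0 : ℝ) h) * V ^ q := by rw [setLIntegral_const, mul_comm]
            _ = ENNReal.ofReal h * V ^ q := by rw [Real.volume_Ico, sub_zero]
  -- extend to all shifts
  have mainAll : ∀ h : ℝ,
      (∫⁻ x : ℝ, ENNReal.ofReal (‖f (x + h) - f x‖ ^ q)) ≤ ENNReal.ofReal |h| * V ^ q := by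
    intro h
    rcases lt_trichotomy h 0 with hneg | rfl | hpos
    · rw [abs_of_neg hneg]
      calc (∫⁻ x, ENNReal.ofReal (‖f (x + h) - f x‖ ^ q))
          = ∫⁻ x, (fun y => ENNReal.ofReal (‖f (y + h) - f y‖ ^ q)) (x + -h) :=
            (lint_shift _ (-h)).symm
        _ = ∫⁻ x, ENNReal.ofReal (‖f (x + -h) - f x‖ ^ q) := by
            refine lintegral_congr fun x => ?_
            show ENNReal.ofReal (‖f (x + -h + h) - f (x + -h)‖ ^ q) = _
            have h1 : x + -h + h = x := by ring
            rw [h1, norm_sub_rev]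
        _ ≤ ENNReal.ofReal (-h) * V ^ q := main (-h) (neg_pos.2 hneg)
    · simp [Real.zero_rpow hq0.ne']
    · rw [abs_of_pos hpos]
      exact main h hpos
  -- conclude
  refine iSup_le fun ε => iSup_le fun hε => ?_
  calc (∫⁻ z in Set.Ioo (-1 : ℝ) 1,
          (∫⁻ x : ℝ, ENNReal.ofReal (‖f (x + ε * z) - f x‖ ^ q)) /
            ENNReal.ofReal (ε * |z|))
      ≤ ∫⁻ _ in Set.Ioo (-1 : ℝ) 1, V ^ q := by
        refine lintegral_mono fun z => ?_
        refine ENNReal.div_le_of_le_mul ?_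
        have habs : ENNReal.ofReal |ε * z| = ENNReal.ofReal (ε * |z|) := by
          rw [abs_mul, abs_of_pos hε.1]
        calc (∫⁻ x : ℝ, ENNReal.ofReal (‖f (x + ε * z) - f x‖ ^ q))
            ≤ ENNReal.ofReal |ε * z| * V ^ q := mainAll (ε * z)
          _ = V ^ q * ENNReal.ofReal (ε * |z|) := by rw [habs, mul_comm]
    _ = volume (Set.Ioo (-1 : ℝ) 1) * V ^ q := by rw [setLIntegral_const, mul_comm]
    _ = 2 * V ^ q := by
        rw [Real.volume_Ioo]
        norm_num
    _ ≤ 4 * V ^ q := by gcongr <;> norm_num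
end
end
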